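/- With F_m(x_1,x_2 | y_1,...,y_m) the weighted sum over Up-Right lattice paths from (2,1) to (1,m) of the product of 1/(x_i+y_j) over visited cells, one has the closed formula F_m = [(x_1+y_1)···(x_1+y_m) − (x_2+y_1)···(x_2+y_m)] / [(x_1−x_2) · ∏_{i=1}^{2} ∏_{j=1}^{m} (x_i+y_j)]. -/

import Mathlib

open Finset

noncomputable section

/-- The field of rational functions over `ℚ` in variables `x_1, x_2, …` and `y_1, y_2, …`. -/
abbrev K : Type := FractionRing (MvPolynomial (ℕ ⊕ ℕ) ℚ)

/-- The variable `x_i` as an element of `K`. -/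
def X (i : ℕ) : K := algebraMap (MvPolynomial (ℕ ⊕ ℕ) ℚ) K (MvPolynomial.X (Sum.inl i))

/-- The variable `y_j` as an element of `K`. -/
def Y (j : ℕ) : K := algebraMap (MvPolynomial (ℕ ⊕ ℕ) ℚ) K (MvPolynomial.X (Sum.inr j))

/-- A step of an Up-Right lattice path: `Up` decreases the first (row) coordinate by one,
`Right` increases the second (column) coordinate by one. -/
def Step (c d : ℕ × ℕ) : Prop :=
  (d.1 + 1 = c.1 ∧ d.2 = c.2) ∨ (d.1 = c.1 ∧ d.2 = c.2 + 1)

/-- `p` is an Up-Right lattice path from cell `A` to cell `B` (listed as its sequence of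
visited cells, starting at `A` and ending at `B`). -/
def IsPath (A B : ℕ × ℕ) (p : List (ℕ × ℕ)) : Prop :=
  p.Chain' Step ∧ p.head? = some A ∧ p.getLast? = some B

/-- All cells of `p` lie in the grid `{1,…,m} × {1,…,n}`. -/
def InGrid (m n : ℕ) (p : List (ℕ × ℕ)) : Prop :=
  ∀ c ∈ p, 1 ≤ c.1 ∧ c.1 ≤ m ∧ 1 ≤ c.2 ∧ c.2 ≤ n

/-- The weight of a path: the product of `1/(x_i + y_j)` over all visited cells `(i,j)`. -/
def pathWeight (x y : ℕ → K) (p : List (ℕ × ℕ)) : K :=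
  (p.map fun c => (x c.1 + y c.2)⁻¹).prod

/-- The single-path partition function: the sum of weights of all Up-Right lattice paths
from `A` to `B` inside the grid `{1,…,m} × {1,…,n}`. -/
def F1 (m n : ℕ) (x y : ℕ → K) (A B : ℕ × ℕ) : K :=
  ∑ᶠ p : {p : List (ℕ × ℕ) // IsPath A B p ∧ InGrid m n p}, pathWeight x y p.1

/-- `γ` is a `k`-tuple of pairwise vertex-disjoint Up-Right lattice paths `γ i : A i → B i`
inside the grid `{1,…,m} × {1,…,n}`. -/
def IsTuple (m n k : ℕ) (A B : Fin k → ℕ × ℕ) (γ : Fin k → List (ℕ × ℕ)) : Prop :=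
  (∀ i, IsPath (A i) (B i) (γ i) ∧ InGrid m n (γ i)) ∧
  (∀ i j, i ≠ j → ∀ c ∈ γ i, c ∉ γ j)

/-- The multi-path partition function: the sum, over all `k`-tuples of pairwise disjoint
Up-Right lattice paths `γ i : A i → B i` in the grid `{1,…,m} × {1,…,n}`, of the product
of `1/(x_i + y_j)` over all visited cells. -/
def Ftuple (m n k : ℕ) (x y : ℕ → K) (A B : Fin k → ℕ × ℕ) : K :=
  ∑ᶠ γ : {γ : Fin k → List (ℕ × ℕ) // IsTuple m n k A B γ}, ∏ i, pathWeight x y (γ.1 i)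

/-!
Rows never increase along an Up-Right path, so a path from `(2, 1)` to `(1, m)` is determined
by the column `j` of its single Up step, and
`F_m = ∑ⱼ ∏_{t ≤ j} (x₂ + y_t)⁻¹ · ∏_{t ≥ j} (x₁ + y_t)⁻¹`.
Since `(x₁ + y_t) - (x₂ + y_t) = x₁ - x₂` does not depend on `t`, induction on `m` gives the
closed form.
-/

theorem isPath_singleton {A B a : ℕ × ℕ} : IsPath A B [a] ↔ A = a ∧ B = a := by
  simp [IsPath, List.Chain', eq_comm]

theorem isPath_cons_cons {A B a c : ℕ × ℕ} {q : List (ℕ × ℕ)} :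
    IsPath A B (a :: c :: q) ↔ A = a ∧ Step a c ∧ IsPath c B (c :: q) := by
  simp only [IsPath, List.Chain', List.isChain_cons_cons, List.head?_cons,
    List.getLast?_cons_cons, Option.some_inj]
  tauto

theorem IsPath.append {A B C D : ℕ × ℕ} {p q : List (ℕ × ℕ)} (hp : IsPath A B p)
    (hq : IsPath C D q) (hBC : Step B C) : IsPath A D (p ++ q) := by
  obtain ⟨hpc, hpA, hpB⟩ := hp
  obtain ⟨hqc, hqC, hqD⟩ := hq
  refine ⟨List.isChain_append.mpr ⟨hpc, hqc, ?_⟩, ?_, ?_⟩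
  · simp_all
  · simp [List.head?_append, hpA]
  · simp [List.getLast?_append, hqD]

theorem IsPath.fst_le {A B : ℕ × ℕ} {p : List (ℕ × ℕ)} (hp : IsPath A B p) :
    B.1 ≤ A.1 := by
  induction p generalizing A with
  | nil => simp [IsPath] at hp
  | cons a q ih =>
    cases q with
    | nil => obtain ⟨rfl, rfl⟩ := isPath_singleton.mp hp; rfl
    | cons c q =>
      obtain ⟨rfl, hac, hq⟩ := isPath_cons_cons.mp hp
      have := ih hq
      rcases hac with h | h <;> omega

-- The cells `(r, a), …, (r, b)`, enumerated exactly as `Finset.Icc a b` is on `ℕ`.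
def rowSegment (r a b : ℕ) : List (ℕ × ℕ) :=
  (List.range' a (b + 1 - a)).map (Prod.mk r)

theorem rowSegment_of_lt {r a b : ℕ} (h : b < a) : rowSegment r a b = [] := by
  simp [rowSegment, show b + 1 - a = 0 by omega]

theorem rowSegment_of_le {r a b : ℕ} (h : a ≤ b) :
    rowSegment r a b = (r, a) :: rowSegment r (a + 1) b := by
  rw [rowSegment, show b + 1 - a = (b + 1 - (a + 1)) + 1 by omega, List.range'_succ]
  rfl

theorem rowSegment_self (r a : ℕ) : rowSegment r a a = [(r, a)] := by
  rw [rowSegment_of_le le_rfl, rowSegment_of_lt (Nat.lt_succ_self a)]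

theorem mem_rowSegment {r a b : ℕ} {c : ℕ × ℕ} :
    c ∈ rowSegment r a b ↔ c.1 = r ∧ a ≤ c.2 ∧ c.2 ≤ b := by
  obtain ⟨c1, c2⟩ := c
  simp [rowSegment]
  omega

theorem isPath_rowSegment {r a b : ℕ} (h : a ≤ b) :
    IsPath (r, a) (r, b) (rowSegment r a b) := by
  induction h using Nat.decreasingInduction with
  | self => simpa [rowSegment_self] using isPath_singleton.mpr ⟨rfl, rfl⟩
  | of_succ a hab ih =>
    rw [rowSegment_of_le hab.le]
    exact (isPath_singleton.mpr ⟨rfl, rfl⟩).append ih (Or.inr ⟨rfl, rfl⟩)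

theorem pathWeight_append (x y : ℕ → K) (p q : List (ℕ × ℕ)) :
    pathWeight x y (p ++ q) = pathWeight x y p * pathWeight x y q := by
  simp [pathWeight]

theorem pathWeight_rowSegment (x y : ℕ → K) (r a b : ℕ) :
    pathWeight x y (rowSegment r a b) = ∏ t ∈ Icc a b, (x r + y t)⁻¹ := by
  rw [pathWeight, rowSegment, List.map_map, Nat.Icc_eq_range']
  rfl

theorem isPath_row_iff {r a b : ℕ} {p : List (ℕ × ℕ)} :
    IsPath (r, a) (r, b) p ↔ a ≤ b ∧ p = rowSegment r a b := by
  refine ⟨fun hp => ?_, fun ⟨hab, hp⟩ => hp ▸ isPath_rowSegment hab⟩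
  induction p generalizing a with
  | nil => simp [IsPath] at hp
  | cons d q ih =>
    cases q with
    | nil =>
      obtain ⟨rfl, h⟩ := isPath_singleton.mp hp
      obtain rfl : b = a := (Prod.mk.inj h).2
      exact ⟨le_rfl, (rowSegment_self r b).symm⟩
    | cons c q =>
      obtain ⟨rfl, hstep, hq⟩ := isPath_cons_cons.mp hp
      rcases hstep with ⟨hup, -⟩ | ⟨hc1, hc2⟩
      · have := hq.fst_le
        simp only at hup this
        omega
      · obtain rfl : c = (r, a + 1) := Prod.ext hc1 hc2
        obtain ⟨hab, hq⟩ := ih hq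
        exact ⟨by omega, by rw [rowSegment_of_le (by omega), hq]⟩

theorem isPath_succ_row_iff {r a b : ℕ} {p : List (ℕ × ℕ)} :
    IsPath (r + 1, a) (r, b) p ↔
      ∃ j, a ≤ j ∧ j ≤ b ∧ p = rowSegment (r + 1) a j ++ rowSegment r j b := by
  refine ⟨fun hp => ?_, fun ⟨j, haj, hjb, hp⟩ => hp ▸
    (isPath_rowSegment haj).append (isPath_rowSegment hjb) (Or.inl ⟨rfl, rfl⟩)⟩
  induction p generalizing a with
  | nil => simp [IsPath] at hp
  | cons d q ih =>
    cases q with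
    | nil =>
      obtain ⟨rfl, h⟩ := isPath_singleton.mp hp
      simp at h
    | cons c q =>
      obtain ⟨rfl, hstep, hq⟩ := isPath_cons_cons.mp hp
      rcases hstep with ⟨hc1, hc2⟩ | ⟨hc1, hc2⟩
      · obtain rfl : c = (r, a) := Prod.ext (by simpa using hc1) hc2
        obtain ⟨hab, hq⟩ := isPath_row_iff.mp hq
        exact ⟨a, le_rfl, hab, by rw [rowSegment_self, hq]; rfl⟩
      · obtain rfl : c = (r + 1, a + 1) := Prod.ext hc1 hc2
        obtain ⟨j, haj, hjb, hq⟩ := ih hq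
        exact ⟨j, by omega, hjb, by rw [rowSegment_of_le (by omega), hq]; rfl⟩

theorem setOf_isPath_inGrid_eq_image (m : ℕ) :
    {p | IsPath (2, 1) (1, m) p ∧ InGrid 2 m p} =
      (fun j => rowSegment 2 1 j ++ rowSegment 1 j m) '' ↑(Icc 1 m) := by
  ext p
  simp only [Set.mem_ofPred_eq, Set.mem_image, coe_Icc, Set.mem_Icc]
  constructor
  · rintro ⟨hp, -⟩
    obtain ⟨j, h1j, hjm, rfl⟩ := isPath_succ_row_iff.mp hp
    exact ⟨j, ⟨h1j, hjm⟩, rfl⟩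
  · rintro ⟨j, ⟨h1j, hjm⟩, rfl⟩
    refine ⟨isPath_succ_row_iff.mpr ⟨j, h1j, hjm, rfl⟩, fun c hc => ?_⟩
    rw [List.mem_append, mem_rowSegment, mem_rowSegment] at hc
    omega

theorem injOn_rowSegment_append (m : ℕ) :
    Set.InjOn (fun j => rowSegment 2 1 j ++ rowSegment 1 j m) ↑(Icc 1 m) := by
  intro j hj k hk hjk
  simp only [coe_Icc, Set.mem_Icc] at hj hk
  have le_of_hook_eq : ∀ {j k}, k ≤ m →
      rowSegment 2 1 j ++ rowSegment 1 j m = rowSegment 2 1 k ++ rowSegment 1 k m → j ≤ k := by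
    intro j k hkm h
    have hk : ((1, k) : ℕ × ℕ) ∈ rowSegment 2 1 k ++ rowSegment 1 k m := by
      simp [mem_rowSegment, hkm]
    rw [← h] at hk
    simp [mem_rowSegment] at hk
    omega
  exact le_antisymm (le_of_hook_eq hk.2 hjk) (le_of_hook_eq hj.2 hjk.symm)

theorem X_add_Y_ne_zero (i j : ℕ) : X i + Y j ≠ 0 := by
  rw [X, Y, ← map_add, Ne, IsFractionRing.to_map_eq_zero_iff]
  intro h
  simpa using congrArg (MvPolynomial.eval fun _ => (1 : ℚ)) h

theorem X_sub_X_ne_zero {i j : ℕ} (hij : i ≠ j) : X i - X j ≠ 0 := by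
  rw [X, X, ← map_sub, Ne, IsFractionRing.to_map_eq_zero_iff, sub_eq_zero]
  exact fun h => hij (Sum.inl_injective (MvPolynomial.X_injective h))

theorem sum_prod_inv_mul_prod_inv {F : Type*} [Field F] {u v : ℕ → F} {c : F} (hc : c ≠ 0)
    (huv : ∀ t, u t = v t + c) (hu : ∀ t, u t ≠ 0) (hv : ∀ t, v t ≠ 0) (m : ℕ) :
    ∑ j ∈ Icc 1 m, (∏ t ∈ Icc 1 j, (v t)⁻¹) * ∏ t ∈ Icc j m, (u t)⁻¹ =
      ((∏ t ∈ Icc 1 m, u t) - ∏ t ∈ Icc 1 m, v t) /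
        (c * ((∏ t ∈ Icc 1 m, u t) * ∏ t ∈ Icc 1 m, v t)) := by
  induction m with
  | zero => simp
  | succ m ih =>
    have hU : ∏ t ∈ Icc 1 m, u t ≠ 0 := prod_ne_zero_iff.mpr fun t _ => hu t
    have hV : ∏ t ∈ Icc 1 m, v t ≠ 0 := prod_ne_zero_iff.mpr fun t _ => hv t
    have hsum :
        ∑ j ∈ Icc 1 m, (∏ t ∈ Icc 1 j, (v t)⁻¹) * ∏ t ∈ Icc j (m + 1), (u t)⁻¹ =
          (∑ j ∈ Icc 1 m, (∏ t ∈ Icc 1 j, (v t)⁻¹) * ∏ t ∈ Icc j m, (u t)⁻¹) *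
            (u (m + 1))⁻¹ := by
      rw [sum_mul]
      refine sum_congr rfl fun j hj => ?_
      rw [prod_Icc_succ_top (by simp at hj; omega), mul_assoc]
    rw [sum_Icc_succ_top (by omega), hsum, ih, Icc_self, prod_singleton,
      prod_Icc_succ_top (by omega), prod_Icc_succ_top (by omega), prod_Icc_succ_top (by omega),
      prod_inv_distrib, huv]
    have hv' := hv (m + 1)
    have hu' : v (m + 1) + c ≠ 0 := huv (m + 1) ▸ hu (m + 1)
    field_simp
    ring

theorem stmt3_general (m : ℕ) :
    F1 2 m X Y (2, 1) (1, m) =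
      ((∏ j ∈ Finset.Icc 1 m, (X 1 + Y j)) - ∏ j ∈ Finset.Icc 1 m, (X 2 + Y j)) /
        ((X 1 - X 2) * ∏ i ∈ Finset.Icc 1 2, ∏ j ∈ Finset.Icc 1 m, (X i + Y j)) := by
  calc F1 2 m X Y (2, 1) (1, m)
      = ∑ j ∈ Icc 1 m, pathWeight X Y (rowSegment 2 1 j ++ rowSegment 1 j m) := by
        refine (finsum_set_coe_eq_finsum_mem
          {p | IsPath (2, 1) (1, m) p ∧ InGrid 2 m p}).trans ?_
        rw [setOf_isPath_inGrid_eq_image, finsum_mem_image (injOn_rowSegment_append m),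
          finsum_mem_coe_finset]
    _ = ∑ j ∈ Icc 1 m,
          (∏ t ∈ Icc 1 j, (X 2 + Y t)⁻¹) * ∏ t ∈ Icc j m, (X 1 + Y t)⁻¹ := by
        simp only [pathWeight_append, pathWeight_rowSegment]
    _ = _ := by
        rw [sum_prod_inv_mul_prod_inv (u := fun t => X 1 + Y t) (v := fun t => X 2 + Y t)
            (X_sub_X_ne_zero (by norm_num : 1 ≠ 2)) (fun t => by ring) (X_add_Y_ne_zero 1)
            (X_add_Y_ne_zero 2),
          show Icc 1 2 = {1, 2} by rfl, prod_pair (by norm_num)]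

/-- Closed formula for `F_m`:
`F_m = [(x_1+y_1)⋯(x_1+y_m) − (x_2+y_1)⋯(x_2+y_m)] / [(x_1−x_2)·∏_{i=1}^2∏_{j=1}^m (x_i+y_j)]`. -/
theorem stmt3 (m : ℕ) (hm : 1 ≤ m) :
    F1 2 m X Y (2, 1) (1, m) =
      ((∏ j ∈ Finset.Icc 1 m, (X 1 + Y j)) - ∏ j ∈ Finset.Icc 1 m, (X 2 + Y j)) /
        ((X 1 - X 2) * ∏ i ∈ Finset.Icc 1 2, ∏ j ∈ Finset.Icc 1 m, (X i + Y j)) :=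
  stmt3_general m
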